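/- arXiv:2303.09196 — 2 statements merged into one kernel-verified Lean document; each statement's English description precedes it below -/
import Mathlib

section
/- Let A ⊆ Δ^n be Lebesgue measurable and permutation invariant. Let Z be an integrable real random variable with finite essential supremum, let Z_1,…,Z_{n−1} be iid with the same law as Z, and set Z_n := esssup Z. Let U_1,…,U_{n−1} be iid uniform on [0,1] with order statistics U_(1) ≤ ⋯ ≤ U_(n−1), set U_(0) := 0 and U_(n) := 1, and let ν be the spacings vector ν_i = U_(i) − U_(i−1). Then P[ sup_{μ ∈ A} ∑_{i=1}^n μ_i Z_i ≥ E[Z] ] ≥ P[ ν ∈ A + K^n ]. -/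
/-!
Let `g` be the quantile function of `Z`. Then `(g(U_1), …, g(U_{n-1}))` has the law of
`(Z_1, …, Z_{n-1})`, so it suffices to prove the inequality pointwise with `Z_i = g(U_i)`.
Cutting `[0, 1]` at the order statistics, and using that `g` is nondecreasing and bounded by
`M = Z_n`, gives `E[Z] = ∫₀¹ g ≤ ∑ ν_i t_i`, where `t` is the increasing rearrangement of
`(g(U_1), …, g(U_{n-1}), M)`. Write `ν = μ + k` with `μ ∈ A` and `k ∈ K^n`: Abel summation
gives `∑ k_i t_i ≤ 0`, because `t` is nondecreasing while the partial sums of `k` are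
nonnegative and its total sum vanishes; and `∑ μ_i t_i = ∑ μ'_i Z_i` for a permutation `μ'`
of `μ`, which lies in `A`.
-/

open MeasureTheory ProbabilityTheory Pointwise

/-- The majorization cone `K^n`. -/
def majorCone (n : ℕ) : Set (Fin n → ℝ) :=
  {x | (∀ k : ℕ, k < n →
          0 ≤ ∑ i ∈ Finset.univ.filter (fun i : Fin n => (i : ℕ) < k), x i) ∧
        ∑ i, x i = 0}

/-- Increasing rearrangement (order statistics) of a finite tuple. -/
noncomputable def sortedVec {α : Type*} [LinearOrder α] {n : ℕ} (z : Fin n → α) : Fin n → α :=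
  z ∘ Tuple.sort z

/-- The full sample vector `(Z_1, …, Z_{n-1}, M)`. -/
def fullVec {Ω : Type*} {n : ℕ} (Zs : Fin (n - 1) → Ω → ℝ) (M : ℝ) (i : Fin n) (ω : Ω) : ℝ :=
  if h : (i : ℕ) < n - 1 then Zs ⟨(i : ℕ), h⟩ ω else M

/-- The augmented uniform order statistics `U_(k)`, `k ∈ [n]`, with the convention `U_(n) := 1`. -/
noncomputable def augOrder {n : ℕ} (U : Fin (n - 1) → ℝ) (k : Fin n) : ℝ :=
  if h : (k : ℕ) + 1 < n then sortedVec U ⟨(k : ℕ), by omega⟩ else 1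

/-- The spacings vector `ν_i = U_(i) - U_(i-1)`, `i ∈ [n]`, with `U_(0) := 0`, `U_(n) := 1`. -/
noncomputable def spacings {n : ℕ} (U : Fin (n - 1) → ℝ) (i : Fin n) : ℝ :=
  augOrder U i -
    (if h : 0 < (i : ℕ) then augOrder U ⟨(i : ℕ) - 1, by have := i.isLt; omega⟩ else 0)

open Set Filter Topology

noncomputable def quantile (μ : Measure ℝ) (u : ℝ) : ℝ :=
  if u ∈ Ioo 0 1 then sInf {x | u ≤ cdf μ x} else 0

lemma volume_Iic_inter_Ioo_zero_one {c : ℝ} (hc : c ≤ 1) :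
    volume (Iic c ∩ Ioo 0 1) = ENNReal.ofReal c := by
  refine le_antisymm ?_ ?_
  · calc volume (Iic c ∩ Ioo 0 1) ≤ volume (Ioc 0 c) :=
          measure_mono fun u hu => ⟨hu.2.1, hu.1⟩
      _ = ENNReal.ofReal c := by simp
  · calc ENNReal.ofReal c = volume (Ioo 0 c) := by simp
      _ ≤ volume (Iic c ∩ Ioo 0 1) :=
          measure_mono fun u hu => ⟨hu.2.le, hu.1, hu.2.trans_le hc⟩

section Quantile

variable {μ : Measure ℝ}

lemma bddBelow_setOf_le_cdf {u : ℝ} (hu : 0 < u) : BddBelow {x | u ≤ cdf μ x} := by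
  obtain ⟨x₀, hx₀⟩ := eventually_atBot.mp ((tendsto_cdf_atBot μ).eventually_lt_const hu)
  exact ⟨x₀, fun y hy => not_lt.mp fun hlt => (hx₀ y hlt.le).not_ge hy⟩

lemma le_cdf_sInf {u : ℝ} (hu : u ∈ Ioo 0 1) : u ≤ cdf μ (sInf {x | u ≤ cdf μ x}) := by
  set S := {x | u ≤ cdf μ x}
  have hne : S.Nonempty := ((tendsto_cdf_atTop μ).eventually_const_le hu.2).exists
  have hbdd : BddBelow S := bddBelow_setOf_le_cdf hu.1
  have : (𝓝[S] sInf S).NeBot := mem_closure_iff_nhdsWithin_neBot.mp (csInf_mem_closure hne hbdd)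
  have hcont : ContinuousWithinAt (cdf μ) S (sInf S) :=
    ((cdf μ).right_continuous _).mono fun x hx => csInf_le hbdd hx
  exact ge_of_tendsto hcont (eventually_nhdsWithin_of_forall fun x hx => hx)

lemma quantile_le_iff {u x : ℝ} (hu : u ∈ Ioo 0 1) :
    quantile μ u ≤ x ↔ u ≤ cdf μ x := by
  rw [quantile, if_pos hu]
  exact ⟨fun h => (le_cdf_sInf hu).trans (monotone_cdf μ h),
    fun h => csInf_le (bddBelow_setOf_le_cdf hu.1) h⟩

lemma monotoneOn_quantile : MonotoneOn (quantile μ) (Ioo 0 1) := fun _ hu _ hv huv =>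
  (quantile_le_iff hu).mpr (huv.trans ((quantile_le_iff hv).mp le_rfl))

lemma quantile_le_of_cdf_eq_one {M u : ℝ} (hM : cdf μ M = 1) (hu : u ∈ Ioo 0 1) :
    quantile μ u ≤ M :=
  (quantile_le_iff hu).mpr (hM ▸ hu.2.le)

lemma quantile_preimage_Iic_inter_Ioo (x : ℝ) :
    quantile μ ⁻¹' Iic x ∩ Ioo 0 1 = Iic (cdf μ x) ∩ Ioo 0 1 := by
  ext u
  simp only [mem_inter_iff, mem_preimage, mem_Iic, and_congr_left_iff]
  exact quantile_le_iff

lemma measurable_quantile : Measurable (quantile μ) := by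
  refine measurable_of_Iic fun x => ?_
  have h : quantile μ ⁻¹' Iic x =
      (Iic (cdf μ x) ∩ Ioo 0 1) ∪ {_u | 0 ≤ x} ∩ (Ioo 0 1)ᶜ := by
    ext u
    by_cases hu : u ∈ Ioo 0 1
    · simp [hu, quantile_le_iff hu]
    · simp [hu, quantile]
  rw [h]
  exact (measurableSet_Iic.inter measurableSet_Ioo).union
    ((MeasurableSet.const _).inter measurableSet_Ioo.compl)

variable [IsProbabilityMeasure μ]

lemma map_quantile_volume_restrict_Ioo : (volume.restrict (Ioo 0 1)).map (quantile μ) = μ := by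
  have : IsProbabilityMeasure (volume.restrict (Ioo (0 : ℝ) 1)) := ⟨by simp⟩
  have := Measure.isProbabilityMeasure_map (μ := volume.restrict (Ioo (0 : ℝ) 1))
    (measurable_quantile (μ := μ)).aemeasurable
  refine Measure.ext_of_Iic _ _ fun x => ?_
  rw [Measure.map_apply measurable_quantile measurableSet_Iic,
    Measure.restrict_apply (measurable_quantile measurableSet_Iic), quantile_preimage_Iic_inter_Ioo,
    volume_Iic_inter_Ioo_zero_one (cdf_le_one μ x), ofReal_cdf]

lemma intervalIntegral_quantile (hμ : Integrable id μ) :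
    IntervalIntegrable (quantile μ) volume 0 1 ∧
      ∫ u in 0..1, quantile μ u = ∫ x, x ∂μ := by
  have hmap := map_quantile_volume_restrict_Ioo (μ := μ)
  have hint : IntegrableOn (quantile μ) (Ioo 0 1) := by
    rw [← hmap] at hμ
    exact (integrable_map_measure aestronglyMeasurable_id measurable_quantile.aemeasurable).mp hμ
  refine ⟨(intervalIntegrable_iff_integrableOn_Ioo_of_le zero_le_one).mpr hint, ?_⟩
  conv_rhs => rw [← hmap]
  rw [integral_map (f := fun x : ℝ => x) measurable_quantile.aemeasurable aestronglyMeasurable_id,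
    intervalIntegral.integral_of_le zero_le_one, integral_Ioc_eq_integral_Ioo]

end Quantile

lemma cdf_map_eq_one_of_ae_le {Ω : Type*} [MeasurableSpace Ω] {P : Measure Ω}
    [IsProbabilityMeasure P] {Z : Ω → ℝ} (hZ : AEMeasurable Z P) {M : ℝ}
    (hM : ∀ᵐ ω ∂P, Z ω ≤ M) : cdf (P.map Z) M = 1 := by
  have := Measure.isProbabilityMeasure_map hZ
  have hmeas : P.map Z (Iic M) = 1 :=
    (mem_ae_iff_prob_eq_one measurableSet_Iic).mp ((ae_map_iff hZ measurableSet_Iic).mpr hM)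
  simpa [← ofReal_cdf, hmeas] using ofReal_cdf (P.map Z) M

section SupportFun

variable {ι : Type*} [Fintype ι]

noncomputable def supportFun (A : Set (ι → ℝ)) (w : ι → ℝ) : ℝ :=
  sSup ((fun μ => ∑ i, μ i * w i) '' A)

variable {A : Set (ι → ℝ)}

lemma bddAbove_image_sum_mul (hA : A ⊆ stdSimplex ℝ ι) (w : ι → ℝ) :
    BddAbove ((fun μ => ∑ i, μ i * w i) '' A) := by
  refine ⟨∑ i, |w i|, ?_⟩
  rintro _ ⟨μ, hμ, rfl⟩
  refine Finset.sum_le_sum fun i _ => ?_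
  have hμi : μ i ≤ 1 :=
    (hA hμ).2 ▸ Finset.single_le_sum (fun j _ => (hA hμ).1 j) (Finset.mem_univ i)
  calc μ i * w i ≤ μ i * |w i| := mul_le_mul_of_nonneg_left (le_abs_self _) ((hA hμ).1 i)
    _ ≤ |w i| := mul_le_of_le_one_left (abs_nonneg _) hμi

lemma sum_mul_le_supportFun (hA : A ⊆ stdSimplex ℝ ι) {μ : ι → ℝ} (hμ : μ ∈ A)
    (w : ι → ℝ) :
    ∑ i, μ i * w i ≤ supportFun A w :=
  le_csSup (bddAbove_image_sum_mul hA w) (mem_image_of_mem _ hμ)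

lemma sum_mul_comp_perm_le_supportFun (hA : A ⊆ stdSimplex ℝ ι)
    (hAperm : ∀ π : Equiv.Perm ι, ∀ μ ∈ A, (fun i => μ (π i)) ∈ A) {μ : ι → ℝ}
    (hμ : μ ∈ A) (σ : Equiv.Perm ι) (w : ι → ℝ) : ∑ i, μ i * w (σ i) ≤ supportFun A w := by
  have := sum_mul_le_supportFun hA (hAperm σ.symm μ hμ) w
  rw [← Equiv.sum_comp σ] at this
  simpa only [Equiv.symm_apply_apply] using this

lemma lowerSemicontinuous_supportFun (hA : A ⊆ stdSimplex ℝ ι) :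
    LowerSemicontinuous (supportFun A) := by
  have h : supportFun A = fun w => ⨆ μ : A, ∑ i, (μ : ι → ℝ) i * w i := by
    ext w
    rw [supportFun, image_eq_range]
    rfl
  rw [h]
  refine lowerSemicontinuous_ciSup (fun w => ?_) fun μ => ?_
  · exact (bddAbove_image_sum_mul hA w).mono (by rintro _ ⟨μ, rfl⟩; exact ⟨μ, μ.2, rfl⟩)
  · exact (continuous_finsetSum _ fun i _ =>
      continuous_const.mul (continuous_apply i)).lowerSemicontinuous

end SupportFun

lemma sum_range_mul_nonpos_of_monotone {N : ℕ} {k t : ℕ → ℝ}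
    (hk : ∀ m < N, 0 ≤ ∑ i ∈ Finset.range m, k i) (hkN : ∑ i ∈ Finset.range N, k i = 0)
    (ht : ∀ i, i + 1 < N → t i ≤ t (i + 1)) : ∑ i ∈ Finset.range N, k i * t i ≤ 0 := by
  calc ∑ i ∈ Finset.range N, k i * t i = ∑ i ∈ Finset.range N, t i • k i := by
        simp only [smul_eq_mul, mul_comm]
    _ = t (N - 1) • ∑ i ∈ Finset.range N, k i - ∑ i ∈ Finset.range (N - 1),
          (t (i + 1) - t i) • ∑ j ∈ Finset.range (i + 1), k j :=
        Finset.sum_range_by_parts _ _ _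
    _ ≤ 0 := by
      rw [hkN, smul_zero, zero_sub, neg_nonpos]
      refine Finset.sum_nonneg fun i hi => ?_
      rw [Finset.mem_range] at hi
      exact smul_nonneg (sub_nonneg.mpr (ht i (by omega))) (hk _ (by omega))

lemma sum_filter_lt_eq_sum_range {n : ℕ} (x : Fin n → ℝ) {m : ℕ} (hm : m ≤ n) :
    ∑ i ∈ Finset.univ.filter (fun i : Fin n => (i : ℕ) < m), x i =
      ∑ i ∈ Finset.range m, if h : i < n then x ⟨i, h⟩ else 0 := by
  have hmap : (Finset.univ.filter (fun i : Fin n => (i : ℕ) < m)).map Fin.valEmbedding =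
      Finset.range m := by
    ext j
    simp only [Finset.mem_map, Finset.mem_filter, Finset.mem_univ, true_and,
      Fin.valEmbedding_apply, Finset.mem_range]
    exact ⟨fun ⟨i, hi, hij⟩ => hij ▸ hi, fun hj => ⟨⟨j, by omega⟩, hj, rfl⟩⟩
  rw [← hmap, Finset.sum_map]
  exact Finset.sum_congr rfl fun i _ => by simp

lemma sum_mul_nonpos_of_mem_majorCone {n : ℕ} {k t : Fin n → ℝ} (hk : k ∈ majorCone n)
    (ht : Monotone t) : ∑ i, k i * t i ≤ 0 := by
  have hk' := fun m hm => sum_filter_lt_eq_sum_range k (m := m) hm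
  have hsum := Fin.sum_univ_eq_sum_range
    (fun i => (if h : i < n then k ⟨i, h⟩ else 0) * if h : i < n then t ⟨i, h⟩ else 0) n
  simp only [Fin.is_lt, dite_true, Fin.eta] at hsum
  rw [hsum]
  refine sum_range_mul_nonpos_of_monotone (fun m hm => ?_) ?_ fun i hi => ?_
  · rw [← hk' m hm.le]
    exact hk.1 m hm
  · rw [← hk' n le_rfl, ← hk.2]
    exact Finset.sum_congr (by ext; simp) fun _ _ => rfl
  · simp only [dif_pos (by omega : i < n), dif_pos hi]
    exact ht (Fin.mk_le_mk.mpr i.le_succ)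

lemma intervalIntegral_le_sum_mul {g : ℝ → ℝ} {b : ℕ → ℝ} (hb : Monotone b) {N : ℕ}
    {s : Fin N → ℝ} (hg : IntervalIntegrable g volume (b 0) (b N))
    (hgs : ∀ j : Fin N, ∀ x ∈ Ioo (b j) (b (j + 1)), g x ≤ s j) :
    ∫ x in b 0..b N, g x ≤ ∑ j : Fin N, (b (j + 1) - b j) * s j := by
  have hpiece : ∀ j < N, IntervalIntegrable g volume (b j) (b (j + 1)) := fun j hj =>
    hg.mono_set <| by
      rw [uIcc_of_le (hb j.le_succ), uIcc_of_le (hb N.zero_le)]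
      exact Icc_subset_Icc (hb j.zero_le) (hb hj)
  rw [← intervalIntegral.sum_integral_adjacent_intervals hpiece, ← Fin.sum_univ_eq_sum_range]
  refine Finset.sum_le_sum fun j _ => ?_
  calc ∫ x in b j..b (j + 1), g x ≤ ∫ _ in b j..b (j + 1), s j :=
        intervalIntegral.integral_mono_on_of_le_Ioo (hb (j : ℕ).le_succ) (hpiece j j.2)
          intervalIntegrable_const (hgs j)
    _ = (b (j + 1) - b j) * s j := by simp

/-- The order statistics `U_(k)` of `u`, for all `k : ℕ`, with `U_(0) = 0` and `U_(k) = 1` for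
`k > m`. -/
noncomputable def augOrderSeq {m : ℕ} (u : Fin m → ℝ) : ℕ → ℝ
  | 0 => 0
  | k + 1 => if h : k < m then sortedVec u ⟨k, h⟩ else 1

section AugOrderSeq

variable {m : ℕ} {u : Fin m → ℝ}

lemma augOrderSeq_of_lt {k : ℕ} (hk : m < k) : augOrderSeq u k = 1 := by
  obtain ⟨k, rfl⟩ := Nat.exists_eq_add_one_of_ne_zero (by omega : k ≠ 0)
  simp [augOrderSeq, show ¬k < m by omega]

lemma monotone_augOrderSeq (hu : ∀ i, u i ∈ Icc 0 1) : Monotone (augOrderSeq u) := by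
  refine monotone_nat_of_le_succ fun k => ?_
  rcases k with _ | k
  · simp only [augOrderSeq]
    split_ifs
    exacts [(hu _).1, zero_le_one]
  · simp only [augOrderSeq]
    split_ifs with h₁ h₂
    · exact Tuple.monotone_sort u (Fin.mk_le_mk.mpr k.le_succ)
    · exact (hu _).2
    · omega
    · exact le_rfl

lemma augOrder_eq_augOrderSeq {n : ℕ} (U : Fin (n - 1) → ℝ) (k : Fin n) :
    augOrder U k = augOrderSeq U (k + 1) := by
  simp only [augOrder, augOrderSeq]
  split_ifs <;> first | rfl | omega

lemma spacings_eq_sub {n : ℕ} (U : Fin (n - 1) → ℝ) (i : Fin n) :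
    spacings U i = augOrderSeq U (i + 1) - augOrderSeq U i := by
  rw [spacings, augOrder_eq_augOrderSeq]
  obtain ⟨_ | i, hi⟩ := i
  · rfl
  · simp [augOrder_eq_augOrderSeq]

end AugOrderSeq

section FullVec

variable {Ω : Type*} {n : ℕ} {Zs : Fin (n - 1) → Ω → ℝ} {M : ℝ}

lemma measurable_fullVec [MeasurableSpace Ω] (hZs : ∀ i, Measurable (Zs i)) :
    Measurable fun ω i => fullVec Zs M i ω :=
  measurable_pi_lambda _ fun i => by
    unfold fullVec
    split_ifs
    exacts [hZs _, measurable_const]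

lemma monotone_fullVec {ω : Ω} (hmono : Monotone fun j => Zs j ω) (hM : ∀ j, Zs j ω ≤ M) :
    Monotone fun i : Fin n => fullVec Zs M i ω := by
  intro i j hij
  simp only [fullVec]
  split_ifs with hi hj hj
  · exact hmono (Fin.mk_le_mk.mpr hij)
  · exact hM _
  · exact absurd (lt_of_le_of_lt (Fin.le_def.mp hij) hj) hi
  · exact le_rfl

lemma fullVec_comp_perm (τ : Equiv.Perm (Fin (n - 1))) (i : Fin n) (ω : Ω) :
    fullVec (fun j => Zs (τ j)) M i ω =
      fullVec Zs M (τ.extendDomain (Fin.castLEquiv (n.sub_le 1)) i) ω := by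
  by_cases hi : (i : ℕ) < n - 1
  · rw [Equiv.Perm.extendDomain_apply_subtype (p := fun i : Fin n => (i : ℕ) < n - 1) _ _ hi]
    simp [fullVec, hi]
  · rw [Equiv.Perm.extendDomain_apply_not_subtype (p := fun i : Fin n => (i : ℕ) < n - 1) _ _ hi]
    simp [fullVec, hi]

end FullVec

lemma le_fullVec_sortedVec {n : ℕ} {g : ℝ → ℝ} {M : ℝ} (hg : MonotoneOn g (Ioo 0 1))
    (hgM : ∀ x ∈ Ioo 0 1, g x ≤ M) {u : Fin (n - 1) → ℝ} (hu : ∀ i, u i ∈ Ioo 0 1)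
    (j : Fin n) {x : ℝ} (hx : x ∈ Ioo 0 1) (hxj : x ≤ augOrderSeq u (j + 1)) :
    g x ≤ fullVec (fun i z => z i) M j fun i => g (sortedVec u i) := by
  unfold fullVec
  split_ifs with hj
  · simp only [augOrderSeq, dif_pos hj] at hxj
    exact hg hx (hu _) hxj
  · exact hgM x hx

theorem intervalIntegral_le_supportFun_of_spacings_mem {n : ℕ} {A : Set (Fin n → ℝ)}
    (hA : A ⊆ stdSimplex ℝ (Fin n))
    (hAperm : ∀ π : Equiv.Perm (Fin n), ∀ μ ∈ A, (fun i => μ (π i)) ∈ A)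
    {g : ℝ → ℝ} {M : ℝ} (hg : MonotoneOn g (Ioo 0 1)) (hgM : ∀ x ∈ Ioo 0 1, g x ≤ M)
    (hint : IntervalIntegrable g volume 0 1) {u : Fin (n - 1) → ℝ} (hu : ∀ i, u i ∈ Ioo 0 1)
    (hmem : spacings u ∈ A + majorCone n) :
    ∫ x in 0..1, g x ≤ supportFun A fun i => fullVec (fun j z => z j) M i fun j => g (u j) := by
  obtain ⟨μ, hμ, k, hk, hsum⟩ := hmem
  have hn : n ≠ 0 := by
    rintro rfl
    simpa using (hA hμ).2
  set t : Fin n → ℝ := fun i => fullVec (fun j z => z j) M i fun j => g (sortedVec u j)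
  have hb : Monotone (augOrderSeq u) := monotone_augOrderSeq fun i => Ioo_subset_Icc_self (hu i)
  have hb0 : augOrderSeq u 0 = 0 := rfl
  have hbn : augOrderSeq u n = 1 := augOrderSeq_of_lt (by omega)
  have h_pieces : ∫ x in 0..1, g x ≤ ∑ i, spacings u i * t i := by
    rw [← hb0, ← hbn] at hint ⊢
    refine (intervalIntegral_le_sum_mul hb hint fun j x hx => ?_).trans_eq
      (Finset.sum_congr rfl fun i _ => by rw [spacings_eq_sub])
    refine le_fullVec_sortedVec hg hgM hu j ⟨?_, ?_⟩ hx.2.le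
    · exact (hb (Nat.zero_le (j : ℕ))).trans_lt hx.1
    · exact hx.2.trans_le (hbn ▸ hb j.2)
  have h_cone : ∑ i, spacings u i * t i ≤ ∑ i, μ i * t i := by
    have hmono : Monotone t := monotone_fullVec (fun _ _ hij => hg (hu _) (hu _)
      (Tuple.monotone_sort u hij)) fun j => hgM _ (hu _)
    have := sum_mul_nonpos_of_mem_majorCone hk hmono
    simp only [← hsum, Pi.add_apply, add_mul, Finset.sum_add_distrib]
    linarith
  have h_perm : ∑ i, μ i * t i ≤
      supportFun A fun i => fullVec (fun j z => z j) M i fun j => g (u j) := by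
    have ht : ∀ i, t i = fullVec (fun j z => z j) M
        ((Tuple.sort u).extendDomain (Fin.castLEquiv (n.sub_le 1)) i) fun j => g (u j) :=
      fun i => fullVec_comp_perm (Zs := fun j (z : Fin (n - 1) → ℝ) => z j) (M := M)
        (Tuple.sort u) i
        fun j => g (u j)
    simp only [ht]
    exact sum_mul_comp_perm_le_supportFun hA hAperm hμ _ fun i => fullVec _ M i _
  exact h_pieces.trans (h_cone.trans h_perm)

section Coupling

variable {Ω ι : Type*} [MeasurableSpace Ω] {P : Measure Ω} [Fintype ι]

lemma ae_mem_Ioo_of_map_eq_uniform {U : Ω → ℝ} (hU : Measurable U)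
    (hlaw : P.map U = volume.restrict (Icc 0 1)) : ∀ᵐ ω ∂P, U ω ∈ Ioo 0 1 :=
  ae_of_ae_map hU.aemeasurable <| by
    rw [hlaw, Measure.restrict_congr_set Ioo_ae_eq_Icc.symm]
    exact ae_restrict_mem measurableSet_Ioo

lemma map_quantile_eq_map_of_iIndepFun {ρ : Measure ℝ} [IsProbabilityMeasure ρ]
    {Us Xs : ι → Ω → ℝ} (hUs_meas : ∀ i, Measurable (Us i)) (hUs_indep : iIndepFun Us P)
    (hUs_law : ∀ i, P.map (Us i) = volume.restrict (Icc 0 1))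
    (hXs_meas : ∀ i, Measurable (Xs i)) (hXs_indep : iIndepFun Xs P)
    (hXs_law : ∀ i, P.map (Xs i) = ρ) :
    P.map (fun ω i => quantile ρ (Us i ω)) = P.map (fun ω i => Xs i ω) := by
  have hG : Measurable fun (v : ι → ℝ) i => quantile ρ (v i) :=
    measurable_pi_lambda _ fun i => measurable_quantile.comp (measurable_pi_apply i)
  refine (Measure.map_map hG (measurable_pi_lambda _ hUs_meas)).symm.trans ?_
  rw [hUs_indep.map_fun_eq_pi_map fun i => (hUs_meas i).aemeasurable,
    hXs_indep.map_fun_eq_pi_map fun i => (hXs_meas i).aemeasurable]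
  simp only [hUs_law, hXs_law, Measure.restrict_congr_set Ioo_ae_eq_Icc.symm]
  exact (measurePreserving_pi _ _ fun _ =>
    ⟨measurable_quantile, map_quantile_volume_restrict_Ioo⟩).map_eq

end Coupling

theorem prob_sup_ge_mean_ge_prob_spacings_general
    {Ω : Type*} [MeasurableSpace Ω] (P : Measure Ω) [IsProbabilityMeasure P]
    (n : ℕ)
    (A : Set (Fin n → ℝ)) (hAsub : A ⊆ stdSimplex ℝ (Fin n))
    (hAperm : ∀ π : Equiv.Perm (Fin n), ∀ μ ∈ A, (fun i => μ (π i)) ∈ A)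
    (Z : Ω → ℝ) (hZmeas : Measurable Z) (hZint : Integrable Z P)
    (M : ℝ) (hM_ub : ∀ᵐ ω ∂P, Z ω ≤ M)
    (Zs : Fin (n - 1) → Ω → ℝ) (hZs_meas : ∀ i, Measurable (Zs i))
    (hZs_indep : iIndepFun Zs P)
    (hZs_law : ∀ i, Measure.map (Zs i) P = Measure.map Z P)
    (Us : Fin (n - 1) → Ω → ℝ) (hUs_meas : ∀ i, Measurable (Us i))
    (hUs_indep : iIndepFun Us P)
    (hUs_law : ∀ i, Measure.map (Us i) P = volume.restrict (Set.Icc (0 : ℝ) 1)) :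
    P {ω | spacings (fun i => Us i ω) ∈ A + majorCone n} ≤
      P {ω | (∫ x, Z x ∂P) ≤
        sSup ((fun μ => ∑ i, μ i * fullVec Zs M i ω) '' A)} := by
  set ρ := P.map Z
  have : IsProbabilityMeasure ρ := Measure.isProbabilityMeasure_map hZmeas.aemeasurable
  obtain ⟨hg_int, hg_mean⟩ := intervalIntegral_quantile (μ := ρ)
    ((integrable_map_measure aestronglyMeasurable_id hZmeas.aemeasurable).mpr hZint)
  have hmean : ∫ x, Z x ∂P = ∫ u in 0..1, quantile ρ u :=
    hg_mean ▸ (integral_map (f := fun x => x) hZmeas.aemeasurable aestronglyMeasurable_id).symm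
  set B := {z : Fin (n - 1) → ℝ |
    ∫ x, Z x ∂P ≤ supportFun A fun i => fullVec (fun j z => z j) M i z}
  have hB : MeasurableSet B := measurableSet_le measurable_const <|
    (lowerSemicontinuous_supportFun hAsub).measurable.comp (measurable_fullVec measurable_pi_apply)
  have hQU : Measurable fun ω i => quantile ρ (Us i ω) :=
    measurable_pi_lambda _ fun i => measurable_quantile.comp (hUs_meas i)
  have hUs_mem : ∀ᵐ ω ∂P, ∀ i, Us i ω ∈ Ioo 0 1 :=
    ae_all_iff.mpr fun i => ae_mem_Ioo_of_map_eq_uniform (hUs_meas i) (hUs_law i)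
  calc P {ω | spacings (fun i => Us i ω) ∈ A + majorCone n}
      ≤ P ((fun ω i => quantile ρ (Us i ω)) ⁻¹' B) := by
        refine measure_mono_ae (hUs_mem.mono fun ω hω hmem => ?_)
        change ∫ x, Z x ∂P ≤
          supportFun A fun i => fullVec (fun j z => z j) M i fun j => quantile ρ (Us j ω)
        rw [hmean]
        exact intervalIntegral_le_supportFun_of_spacings_mem hAsub hAperm
          monotoneOn_quantile (fun x => quantile_le_of_cdf_eq_one
            (cdf_map_eq_one_of_ae_le hZmeas.aemeasurable hM_ub)) hg_int hω hmem
    _ = P ((fun ω i => Zs i ω) ⁻¹' B) := by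
        rw [← Measure.map_apply hQU hB,
          ← Measure.map_apply (measurable_pi_lambda _ hZs_meas) hB,
          map_quantile_eq_map_of_iIndepFun hUs_meas hUs_indep hUs_law hZs_meas hZs_indep hZs_law]
    _ = _ := rfl

/-- main theorem: for measurable, permutation-invariant `A ⊆ Δ^n`, an integrable
`Z` with finite essential supremum `M`, iid copies `Z_1, …, Z_{n-1}` of `Z` with `Z_n := M`,
and `ν` the uniform spacings vector,
`P[sup_{μ ∈ A} ∑ μ_i Z_i ≥ E[Z]] ≥ P[ν ∈ A + K^n]`. -/
theorem prob_sup_ge_mean_ge_prob_spacings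
    {Ω : Type*} [MeasurableSpace Ω] (P : Measure Ω) [IsProbabilityMeasure P]
    (n : ℕ) (hn : 1 ≤ n)
    (A : Set (Fin n → ℝ)) (hAsub : A ⊆ stdSimplex ℝ (Fin n)) (hAmeas : MeasurableSet A)
    (hAperm : ∀ π : Equiv.Perm (Fin n), ∀ μ ∈ A, (fun i => μ (π i)) ∈ A)
    (Z : Ω → ℝ) (hZmeas : Measurable Z) (hZint : Integrable Z P)
    (M : ℝ) (hM_ub : ∀ᵐ ω ∂P, Z ω ≤ M) (hM_least : ∀ c : ℝ, (∀ᵐ ω ∂P, Z ω ≤ c) → M ≤ c)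
    (Zs : Fin (n - 1) → Ω → ℝ) (hZs_meas : ∀ i, Measurable (Zs i))
    (hZs_indep : iIndepFun Zs P)
    (hZs_law : ∀ i, Measure.map (Zs i) P = Measure.map Z P)
    (Us : Fin (n - 1) → Ω → ℝ) (hUs_meas : ∀ i, Measurable (Us i))
    (hUs_indep : iIndepFun Us P)
    (hUs_law : ∀ i, Measure.map (Us i) P = volume.restrict (Set.Icc (0 : ℝ) 1)) :
    P {ω | spacings (fun i => Us i ω) ∈ A + majorCone n} ≤
      P {ω | (∫ x, Z x ∂P) ≤
        sSup ((fun μ => ∑ i, μ i * fullVec Zs M i ω) '' A)} :=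
  prob_sup_ge_mean_ge_prob_spacings_general P n A hAsub hAperm Z hZmeas hZint M hM_ub Zs hZs_meas
    hZs_indep hZs_law Us hUs_meas hUs_indep hUs_law
end

section
/- Let φ : ℝ → ℝ ∪ {+∞} be a proper, convex, lower semicontinuous function with φ(1) = 0, φ(t) = +∞ for t < 0, and φ finite on (0,∞), and let φ*(s) = sup_{t ≥ 0} (t·s − φ(t)). Then for every ν ∈ Δ^n, inf{ (1/n) ∑_{i=1}^n φ(n·μ_i) : μ ∈ ℝ^n, μ_i ≥ 0 for all i, ν − μ ∈ K^n } = sup{ ∑_{i=1}^n ( ν_i·λ_i − (1/n)·φ*(λ_i) ) : λ ∈ ℝ^n, λ_1 ≤ λ_2 ≤ ⋯ ≤ λ_n }. -/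
open Finset Set Filter Topology

namespace EReal

lemma coe_finset_sum {ι : Type*} (s : Finset ι) (f : ι → ℝ) :
    ((∑ i ∈ s, f i : ℝ) : EReal) = ∑ i ∈ s, (f i : EReal) :=
  map_sum (⟨⟨(↑), coe_zero⟩, coe_add⟩ : ℝ →+ EReal) f s

lemma mul_finset_sum_of_nonneg_of_ne_top {ι : Type*} {x : EReal} (hx : 0 ≤ x) (hx' : x ≠ ⊤)
    (s : Finset ι) (f : ι → EReal) : x * ∑ i ∈ s, f i = ∑ i ∈ s, x * f i :=
  map_sum (⟨⟨(x * ·), mul_zero x⟩, left_distrib_of_nonneg_of_ne_top hx hx'⟩ : EReal →+ EReal) f s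

lemma exists_coe_lt_of_lt_sum {ι : Type*} [DecidableEq ι] {s : Finset ι} {x : ι → EReal}
    {w : EReal} (hw : w < ∑ i ∈ s, x i) :
    ∃ c : ι → ℝ, (∀ i ∈ s, (c i : EReal) < x i) ∧ w < ((∑ i ∈ s, c i : ℝ) : EReal) := by
  induction s using Finset.induction_on generalizing w with
  | empty => exact ⟨0, by simp, by simpa using hw⟩
  | insert a s ha ih =>
    rw [sum_insert ha] at hw
    obtain ⟨a', ha', b', hb', hlt⟩ : ∃ a' < x a, ∃ b' < ∑ i ∈ s, x i, w < a' + b' := by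
      by_contra! h
      exact hw.not_ge (add_le_of_forall_lt h)
    obtain ⟨c, hc, hbc⟩ := ih hb'
    lift a' to ℝ using ⟨ha'.ne_top, fun h => by simp [h] at hlt⟩
    refine ⟨Function.update c a a', fun i hi => ?_, ?_⟩
    · rcases mem_insert.1 hi with rfl | hi
      · simpa using ha'
      · simpa [ne_of_mem_of_not_mem hi ha] using hc i hi
    · rw [sum_insert ha, Function.update_self, sum_update_of_notMem ha, coe_add]
      exact hlt.trans_le (add_le_add le_rfl hbc.le)

lemma sum_le_of_forall_coe_lt {ι : Type*} [DecidableEq ι] {s : Finset ι} {x : ι → EReal}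
    {D : EReal} (h : ∀ c : ι → ℝ, (∀ i ∈ s, (c i : EReal) < x i) →
      ((∑ i ∈ s, c i : ℝ) : EReal) ≤ D) :
    ∑ i ∈ s, x i ≤ D :=
  le_of_forall_lt_imp_le_of_dense fun w hw => by
    obtain ⟨c, hc, hwc⟩ := exists_coe_lt_of_lt_sum hw
    exact hwc.le.trans (h c hc)

lemma sum_coe_sub_le_sum_coe_sub {ι : Type*} {s : Finset ι} {a b : ι → ℝ} (y : ι → EReal)
    (h : ∑ i ∈ s, a i ≤ ∑ i ∈ s, b i) :
    ∑ i ∈ s, ((a i : EReal) - y i) ≤ ∑ i ∈ s, ((b i : EReal) - y i) := by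
  simp only [sub_eq_add_neg, sum_add_distrib, ← coe_finset_sum]
  gcongr

end EReal

lemma ConvexOn.add_leftDeriv_mul_sub_le {S : Set ℝ} {f : ℝ → ℝ} {x y : ℝ} (hf : ConvexOn ℝ S f)
    (hx : x ∈ interior S) (hy : y ∈ S) :
    f x + derivWithin f (Iio x) x * (y - x) ≤ f y := by
  rcases lt_trichotomy y x with hyx | rfl | hxy
  · have h := hf.slope_le_leftDeriv_of_mem_interior hy hx hyx
    rw [slope_def_field, div_le_iff₀ (sub_pos.2 hyx)] at h
    linarith
  · simp
  · have h := (hf.leftDeriv_le_rightDeriv_of_mem_interior hx).trans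
      (hf.rightDeriv_le_slope_of_mem_interior hx hy hxy)
    rw [slope_def_field, le_div_iff₀ (sub_pos.2 hxy)] at h
    linarith

section FenchelConjugate

variable {φ : ℝ → EReal}

noncomputable def fenchelConjugate (φ : ℝ → EReal) (s : ℝ) : EReal :=
  ⨆ t ∈ Ici (0 : ℝ), ((t * s : ℝ) : EReal) - φ t

noncomputable def leftDeriv (φ : ℝ → EReal) (t : ℝ) : ℝ :=
  derivWithin (fun u => (φ u).toReal) (Iio t) t

lemma coe_mul_sub_le_fenchelConjugate {t : ℝ} (ht : 0 ≤ t) (s : ℝ) :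
    ((t * s : ℝ) : EReal) - φ t ≤ fenchelConjugate φ s :=
  le_iSup₂ (f := fun t (_ : t ∈ Ici (0 : ℝ)) => ((t * s : ℝ) : EReal) - φ t) t ht

def nonnegDomain (φ : ℝ → EReal) : Set ℝ := {t | 0 ≤ t ∧ φ t ≠ ⊤}

lemma convex_nonnegDomain (hφ_fin : ∀ t, 0 < t → φ t ≠ ⊤) : Convex ℝ (nonnegDomain φ) :=
  Set.OrdConnected.convex ⟨fun a ha _ _ t ht => by
    rcases (ha.1.trans ht.1).eq_or_lt with h0 | hpos
    · exact (le_antisymm ht.1 (h0 ▸ ha.1)) ▸ ha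
    · exact ⟨hpos.le, hφ_fin t hpos⟩⟩

lemma convexOn_toReal (hφ_bot : ∀ t, φ t ≠ ⊥)
    (hφ_conv : ∀ x y a b : ℝ, 0 ≤ a → 0 ≤ b → a + b = 1 →
      φ (a * x + b * y) ≤ (a : EReal) * φ x + (b : EReal) * φ y)
    {S : Set ℝ} (hS : Convex ℝ S) (hfin : ∀ t ∈ S, φ t ≠ ⊤) :
    ConvexOn ℝ S (fun t => (φ t).toReal) := by
  refine ⟨hS, fun x hx y hy a b ha hb hab => ?_⟩
  have h := hφ_conv x y a b ha hb hab
  rw [← EReal.coe_toReal (hfin x hx) (hφ_bot x), ← EReal.coe_toReal (hfin y hy) (hφ_bot y),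
    ← EReal.coe_mul, ← EReal.coe_mul, ← EReal.coe_add] at h
  simpa only [smul_eq_mul, EReal.toReal_coe] using
    EReal.toReal_le_toReal h (hφ_bot _) (EReal.coe_ne_top _)

lemma mem_interior_nonnegDomain (hφ_fin : ∀ t, 0 < t → φ t ≠ ⊤) {t : ℝ} (ht : 0 < t) :
    t ∈ interior (nonnegDomain φ) :=
  interior_mono (s := Ioi 0)
    (fun u (hu : 0 < u) => show u ∈ nonnegDomain φ from ⟨hu.le, hφ_fin u hu⟩)
    (by rwa [isOpen_Ioi.interior_eq])

lemma coe_add_leftDeriv_mul_sub_le (hφ_bot : ∀ t, φ t ≠ ⊥) (hφ_fin : ∀ t, 0 < t → φ t ≠ ⊤)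
    (hconv : ConvexOn ℝ (nonnegDomain φ) (fun t => (φ t).toReal))
    {t u : ℝ} (ht : 0 < t) (hu : 0 ≤ u) :
    (((φ t).toReal + leftDeriv φ t * (u - t) : ℝ) : EReal) ≤ φ u := by
  by_cases hu_top : φ u = ⊤
  · simp [hu_top]
  · rw [← EReal.coe_toReal hu_top (hφ_bot u), EReal.coe_le_coe_iff]
    exact hconv.add_leftDeriv_mul_sub_le (mem_interior_nonnegDomain hφ_fin ht) ⟨hu, hu_top⟩

lemma monotoneOn_leftDeriv (hφ_fin : ∀ t, 0 < t → φ t ≠ ⊤)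
    (hconv : ConvexOn ℝ (nonnegDomain φ) (fun t => (φ t).toReal)) :
    MonotoneOn (leftDeriv φ) (Ioi 0) := fun _ hs _ ht hst =>
  hconv.monotoneOn_leftDeriv (mem_interior_nonnegDomain hφ_fin hs)
    (mem_interior_nonnegDomain hφ_fin ht) hst

lemma fenchelConjugate_leftDeriv (hφ_bot : ∀ t, φ t ≠ ⊥) (hφ_fin : ∀ t, 0 < t → φ t ≠ ⊤)
    (hconv : ConvexOn ℝ (nonnegDomain φ) (fun t => (φ t).toReal)) {t : ℝ} (ht : 0 < t) :
    fenchelConjugate φ (leftDeriv φ t) = ((t * leftDeriv φ t - (φ t).toReal : ℝ) : EReal) := by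
  have hφt : φ t = ((φ t).toReal : EReal) := (EReal.coe_toReal (hφ_fin t ht) (hφ_bot t)).symm
  refine le_antisymm (iSup₂_le fun u hu => ?_) ?_
  · calc ((u * leftDeriv φ t : ℝ) : EReal) - φ u
        ≤ ((u * leftDeriv φ t : ℝ) : EReal)
            - (((φ t).toReal + leftDeriv φ t * (u - t) : ℝ) : EReal) :=
          EReal.sub_le_sub le_rfl (coe_add_leftDeriv_mul_sub_le hφ_bot hφ_fin hconv ht hu)
      _ = ((t * leftDeriv φ t - (φ t).toReal : ℝ) : EReal) := by
          rw [← EReal.coe_sub]; ring_nf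
  · calc ((t * leftDeriv φ t - (φ t).toReal : ℝ) : EReal)
        = ((t * leftDeriv φ t : ℝ) : EReal) - φ t := by rw [hφt, ← EReal.coe_sub, EReal.toReal_coe]
      _ ≤ fenchelConjugate φ (leftDeriv φ t) := coe_mul_sub_le_fenchelConjugate ht.le _

lemma eventually_fenchelConjugate_neg_le (hφ_bot : ∀ t, φ t ≠ ⊥)
    (hφ_fin : ∀ t, 0 < t → φ t ≠ ⊤)
    (hconv : ConvexOn ℝ (nonnegDomain φ) (fun t => (φ t).toReal))
    (hφ_lsc : LowerSemicontinuous φ) {c : ℝ} (hc : (c : EReal) < φ 0) :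
    ∀ᶠ r in atTop, fenchelConjugate φ (-r) ≤ ((-c : ℝ) : EReal) := by
  obtain ⟨δ, hδ, hnear⟩ := Metric.eventually_nhds_iff.1 (hφ_lsc 0 c hc)
  set a := (φ 1).toReal
  set b := leftDeriv φ 1
  filter_upwards [eventually_ge_atTop 0, eventually_ge_atTop (-b),
    eventually_ge_atTop ((c - a + b) / δ - b)] with r hr₀ hrb hrδ
  refine iSup₂_le fun u (hu : 0 ≤ u) => ?_
  rcases lt_or_ge u δ with huδ | hδu
  · have hcu : (c : EReal) ≤ φ u := (hnear (by rwa [Real.dist_eq, sub_zero, abs_of_nonneg hu])).le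
    calc ((u * -r : ℝ) : EReal) - φ u ≤ ((u * -r : ℝ) : EReal) - (c : EReal) :=
          EReal.sub_le_sub le_rfl hcu
      _ ≤ ((-c : ℝ) : EReal) := by
          rw [← EReal.coe_sub, EReal.coe_le_coe_iff]; nlinarith
  · -- `φ` lies above its supporting line at `1`, whose slope `b` is beaten by `-r`
    have hδr : c - a + b ≤ (r + b) * δ := by rwa [sub_le_iff_le_add, div_le_iff₀ hδ] at hrδ
    have hur : δ * (r + b) ≤ u * (r + b) := mul_le_mul_of_nonneg_right hδu (by linarith)
    calc ((u * -r : ℝ) : EReal) - φ u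
        ≤ ((u * -r : ℝ) : EReal) - ((a + b * (u - 1) : ℝ) : EReal) :=
          EReal.sub_le_sub le_rfl (coe_add_leftDeriv_mul_sub_le hφ_bot hφ_fin hconv one_pos hu)
      _ ≤ ((-c : ℝ) : EReal) := by
          rw [← EReal.coe_sub, EReal.coe_le_coe_iff]; nlinarith

lemma coe_mul_sub_inv_mul_fenchelConjugate_le (hφ_bot : ∀ t, φ t ≠ ⊥) {κ m : ℝ} (hκ : 0 < κ)
    (hm : 0 ≤ m) (s : ℝ) :
    ((m * s : ℝ) : EReal) - ((κ⁻¹ : ℝ) : EReal) * fenchelConjugate φ s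
      ≤ ((κ⁻¹ : ℝ) : EReal) * φ (κ * m) := by
  by_cases htop : φ (κ * m) = ⊤
  · rw [htop, EReal.coe_mul_top_of_pos (inv_pos.2 hκ)]
    exact le_top
  set f := (φ (κ * m)).toReal
  have hφf : φ (κ * m) = (f : EReal) := (EReal.coe_toReal htop (hφ_bot _)).symm
  have hyoung : (((κ * m) * s - f : ℝ) : EReal) ≤ fenchelConjugate φ s := by
    rw [EReal.coe_sub, ← hφf]
    exact coe_mul_sub_le_fenchelConjugate (by positivity) s
  calc ((m * s : ℝ) : EReal) - ((κ⁻¹ : ℝ) : EReal) * fenchelConjugate φ s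
      ≤ ((m * s : ℝ) : EReal) - ((κ⁻¹ : ℝ) : EReal) * (((κ * m) * s - f : ℝ) : EReal) :=
        EReal.sub_le_sub le_rfl (mul_le_mul_of_nonneg_left hyoung (by positivity))
    _ = ((κ⁻¹ : ℝ) : EReal) * φ (κ * m) := by
        rw [hφf, ← EReal.coe_mul, ← EReal.coe_mul, ← EReal.coe_sub]
        congr 1
        field_simp
        ring

noncomputable def dualCandidate (φ : ℝ → EReal) (κ r m : ℝ) : ℝ :=
  if m = 0 then -r else leftDeriv φ (κ * m)

lemma eventually_coe_le_dualCandidate (hφ_bot : ∀ t, φ t ≠ ⊥) (hφ_fin : ∀ t, 0 < t → φ t ≠ ⊤)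
    (hconv : ConvexOn ℝ (nonnegDomain φ) (fun t => (φ t).toReal))
    (hφ_lsc : LowerSemicontinuous φ) {κ m c : ℝ} (hκ : 0 < κ) (hm : 0 ≤ m)
    (hc : (c : EReal) < φ (κ * m)) :
    ∀ᶠ r in atTop, ((κ⁻¹ * c : ℝ) : EReal) ≤ ((m * dualCandidate φ κ r m : ℝ) : EReal)
      - ((κ⁻¹ : ℝ) : EReal) * fenchelConjugate φ (dualCandidate φ κ r m) := by
  rcases hm.eq_or_lt with rfl | hm
  · rw [mul_zero] at hc
    filter_upwards [eventually_fenchelConjugate_neg_le hφ_bot hφ_fin hconv hφ_lsc hc] with r hr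
    simp only [dualCandidate, if_true, zero_mul]
    calc ((κ⁻¹ * c : ℝ) : EReal) = ((0 : ℝ) : EReal) - ((κ⁻¹ * -c : ℝ) : EReal) := by
          rw [← EReal.coe_sub]; ring_nf
      _ ≤ ((0 : ℝ) : EReal) - ((κ⁻¹ : ℝ) : EReal) * fenchelConjugate φ (-r) := by
          rw [EReal.coe_mul]
          exact EReal.sub_le_sub le_rfl (mul_le_mul_of_nonneg_left hr (by positivity))
  · refine Eventually.of_forall fun r => ?_
    have hκm : 0 < κ * m := mul_pos hκ hm
    have hfc : c < (φ (κ * m)).toReal := by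
      rwa [← EReal.coe_lt_coe_iff, EReal.coe_toReal (hφ_fin _ hκm) (hφ_bot _)]
    simp only [dualCandidate, hm.ne', if_false]
    rw [fenchelConjugate_leftDeriv hφ_bot hφ_fin hconv hκm, ← EReal.coe_mul, ← EReal.coe_sub,
      EReal.coe_le_coe_iff]
    have : κ⁻¹ * (κ * m * leftDeriv φ (κ * m)) = m * leftDeriv φ (κ * m) := by
      field_simp
    nlinarith [inv_pos.2 hκ]

lemma monotone_dualCandidate (hφ_fin : ∀ t, 0 < t → φ t ≠ ⊤)
    (hconv : ConvexOn ℝ (nonnegDomain φ) (fun t => (φ t).toReal))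
    {ι : Type*} [Preorder ι] {μ : ι → ℝ} {κ r : ℝ} (hκ : 0 < κ) (hμ : Monotone μ)
    (hμ₀ : ∀ i, 0 ≤ μ i) (hr : ∀ i, -r ≤ leftDeriv φ (κ * μ i)) :
    Monotone fun i => dualCandidate φ κ r (μ i) := by
  intro i j hij
  by_cases hi : μ i = 0
  · by_cases hj : μ j = 0
    · simp [dualCandidate, hi, hj]
    · simpa [dualCandidate, hi, hj] using hr j
  · have hj : μ j ≠ 0 := ((lt_of_le_of_ne (hμ₀ i) (Ne.symm hi)).trans_le (hμ hij)).ne'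
    simp only [dualCandidate, hi, hj, if_false]
    have hpos : 0 < μ i := lt_of_le_of_ne (hμ₀ i) (Ne.symm hi)
    exact monotoneOn_leftDeriv hφ_fin hconv (mul_pos hκ hpos) (mul_pos hκ (hpos.trans_le (hμ hij)))
      (mul_le_mul_of_nonneg_left (hμ hij) hκ.le)

section Majorization

variable {n m : ℕ}

def partialSum (x : Fin n → ℝ) (k : ℕ) : ℝ :=
  ∑ i ∈ univ.filter (fun i : Fin n => (i : ℕ) < k), x i

lemma partialSum_eq_sum_range (x : Fin n → ℝ) {k : ℕ} (hk : k ≤ n) :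
    partialSum x k = ∑ j ∈ range k, if h : j < n then x ⟨j, h⟩ else 0 := by
  have hmap : (univ.filter fun i : Fin n => (i : ℕ) < k).map Fin.valEmbedding = range k := by
    ext j
    simp only [Finset.mem_map, mem_filter, Finset.mem_univ, true_and, Fin.valEmbedding_apply,
      Finset.mem_range]
    exact ⟨fun ⟨i, hi, hij⟩ => hij ▸ hi, fun hj => ⟨⟨j, by omega⟩, hj, rfl⟩⟩
  rw [← hmap, sum_map]
  exact sum_congr rfl fun i _ => by simp

lemma sum_mul_eq_sub_sum_partialSum (x l : Fin (m + 1) → ℝ) :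
    ∑ i, l i * x i = l (Fin.last m) * ∑ i, x i
      - ∑ k : Fin m, (l k.succ - l k.castSucc) * partialSum x (k + 1) := by
  set X : ℕ → ℝ := fun j => if h : j < m + 1 then x ⟨j, h⟩ else 0
  set L : ℕ → ℝ := fun j => if h : j < m + 1 then l ⟨j, h⟩ else 0
  have hsum : ∑ i, l i * x i = ∑ j ∈ range (m + 1), L j • X j := by
    rw [sum_fin_eq_sum_range]
    refine sum_congr rfl fun j hj => ?_
    simp [L, X, Nat.lt_succ_iff.1 (Finset.mem_range.1 hj)]
  rw [hsum, sum_range_by_parts, Nat.add_sub_cancel, sum_fin_eq_sum_range x,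
    ← Fin.sum_univ_eq_sum_range (fun i => (L (i + 1) - L i) • ∑ j ∈ range (i + 1), X j) m]
  congr 1
  · rw [smul_eq_mul, show L m = l (Fin.last m) from dif_pos m.lt_succ_self]
  · refine sum_congr rfl fun k _ => ?_
    rw [partialSum_eq_sum_range x (by omega), smul_eq_mul,
      show L (k + 1) = l k.succ from dif_pos (by omega),
      show L k = l k.castSucc from dif_pos (by omega)]

lemma sum_mul_nonpos_of_mem_majorCone_s8 {x l : Fin (m + 1) → ℝ} (hx : x ∈ majorCone (m + 1))
    (hl : Monotone l) : ∑ i, l i * x i ≤ 0 := by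
  rw [sum_mul_eq_sub_sum_partialSum, hx.2, mul_zero, zero_sub, neg_nonpos]
  exact sum_nonneg fun k _ =>
    mul_nonneg (sub_nonneg.2 (hl (Fin.castSucc_le_succ k))) (hx.1 _ (by omega))

lemma sum_mul_eq_zero_of_mem_majorCone {x l : Fin (m + 1) → ℝ} (hx : x ∈ majorCone (m + 1))
    (hl : ∀ k : Fin m, 0 < partialSum x (k + 1) → l k.castSucc = l k.succ) :
    ∑ i, l i * x i = 0 := by
  rw [sum_mul_eq_sub_sum_partialSum, hx.2, mul_zero, zero_sub, neg_eq_zero]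
  refine sum_eq_zero fun k _ => ?_
  rcases (hx.1 _ (by omega) : 0 ≤ partialSum x (k + 1)).eq_or_lt with h | h
  · rw [show partialSum x (k + 1) = 0 from h.symm, mul_zero]
  · rw [hl k h, sub_self, zero_mul]

def majorFeasible (ν : Fin n → ℝ) : Set (Fin n → ℝ) :=
  {μ | (∀ i, 0 ≤ μ i) ∧ ν - μ ∈ majorCone n}

lemma isClosed_majorCone : IsClosed (majorCone n) := by
  simp only [majorCone, ofPred_and, ofPred_forall]
  exact (isClosed_iInter fun k => isClosed_iInter fun _ =>
    isClosed_le continuous_const (by fun_prop)).inter (isClosed_eq (by fun_prop) continuous_const)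

lemma isCompact_majorFeasible (ν : Fin n → ℝ) : IsCompact (majorFeasible ν) := by
  refine (isCompact_Icc (a := 0) (b := fun _ => ∑ i, ν i)).of_isClosed_subset ?_ ?_
  · simp only [majorFeasible, ofPred_and, ofPred_forall]
    exact (isClosed_iInter fun i => isClosed_le continuous_const (continuous_apply i)).inter
      (isClosed_majorCone.preimage (by fun_prop))
  · intro μ ⟨hμ₀, hμ⟩
    refine ⟨hμ₀, fun i => ?_⟩
    have htot : ∑ i, μ i = ∑ i, ν i := by
      simpa [sum_sub_distrib, sub_eq_zero, eq_comm] using hμ.2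
    exact htot ▸ single_le_sum (fun j _ => hμ₀ j) (Finset.mem_univ i)

lemma exists_isMinOn_sum_sq {ν : Fin n → ℝ} (hν : ∀ i, 0 ≤ ν i) :
    ∃ μ ∈ majorFeasible ν, IsMinOn (fun μ => ∑ i, μ i ^ 2) (majorFeasible ν) μ :=
  (isCompact_majorFeasible ν).exists_isMinOn ⟨ν, hν, by simp [majorCone]⟩ (by fun_prop)

def transfer (μ : Fin n → ℝ) (i j : Fin n) (ε : ℝ) : Fin n → ℝ :=
  μ + ε • (Pi.single i 1 - Pi.single j 1)

lemma sum_sub_transfer (x μ : Fin n → ℝ) (i j : Fin n) (ε : ℝ) (s : Finset (Fin n)) :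
    ∑ l ∈ s, (x - transfer μ i j ε) l
      = ∑ l ∈ s, (x - μ) l - ε * ((if i ∈ s then 1 else 0) - if j ∈ s then 1 else 0) := by
  simp [transfer, sum_sub_distrib, sum_add_distrib, ← mul_sum, sum_pi_single']
  ring

lemma sum_sq_transfer (μ : Fin n → ℝ) {i j : Fin n} (hij : i ≠ j) (ε : ℝ) :
    ∑ l, transfer μ i j ε l ^ 2 = ∑ l, μ l ^ 2 + 2 * ε * (μ i - μ j + ε) := by
  have h : ∀ l, transfer μ i j ε l ^ 2 = μ l ^ 2 + ((if l = i then 2 * ε * μ i + ε ^ 2 else 0)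
      + if l = j then ε ^ 2 - 2 * ε * μ j else 0) := by
    intro l
    by_cases hi : l = i
    · subst hi; simp [transfer, hij]; ring
    · by_cases hj : l = j
      · subst hj; simp [transfer, hi]; ring
      · simp [transfer, hi, hj]
  simp only [h, sum_add_distrib, sum_ite_eq', Finset.mem_univ, if_true]
  ring

lemma transfer_mem_majorFeasible {ν μ : Fin (m + 1) → ℝ} (hμ : μ ∈ majorFeasible ν) (k : Fin m)
    {ε : ℝ} (hε : ε ≤ partialSum (ν - μ) (k + 1)) (h₁ : 0 ≤ μ k.castSucc + ε)
    (h₂ : 0 ≤ μ k.succ - ε) :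
    transfer μ k.castSucc k.succ ε ∈ majorFeasible ν := by
  refine ⟨fun i => ?_, fun p hp => ?_, ?_⟩
  · by_cases hi : i = k.castSucc
    · subst hi; simpa [transfer, Pi.single_apply, k.castSucc_lt_succ.ne] using h₁
    · by_cases hi' : i = k.succ
      · subst hi'; simpa [transfer, Pi.single_apply, k.castSucc_lt_succ.ne'] using h₂
      · simpa [transfer, Pi.single_apply, hi, hi'] using hμ.1 i
  · have h := hμ.2.1 p hp
    rw [partialSum] at hε
    rw [sum_sub_transfer]
    simp only [mem_filter, Finset.mem_univ, true_and, Fin.val_castSucc, Fin.val_succ]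
    rcases lt_trichotomy p (k + 1) with hpk | rfl | hpk
    · rw [if_neg (by omega), if_neg (by omega)]; linarith
    · rw [if_pos (by omega), if_neg (by omega)]; linarith
    · rw [if_pos (by omega), if_pos (by omega)]; linarith
  · rw [sum_sub_transfer, if_pos (Finset.mem_univ _), if_pos (Finset.mem_univ _)]
    simpa using hμ.2.2

section Minimizer

variable {ν μ : Fin (m + 1) → ℝ}

lemma nonneg_of_isMinOn_transfer
    (hmin : IsMinOn (fun μ => ∑ i, μ i ^ 2) (majorFeasible ν) μ) (hμ : μ ∈ majorFeasible ν)
    (k : Fin m) {ε : ℝ} (hε : ε ≤ partialSum (ν - μ) (k + 1))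
    (h₁ : 0 ≤ μ k.castSucc + ε) (h₂ : 0 ≤ μ k.succ - ε) :
    0 ≤ ε * (μ k.castSucc - μ k.succ + ε) := by
  have h := hmin (transfer_mem_majorFeasible hμ k hε h₁ h₂)
  simp only [mem_ofPred_eq, sum_sq_transfer μ k.castSucc_lt_succ.ne] at h
  linarith

lemma monotone_of_isMinOn (hmin : IsMinOn (fun μ => ∑ i, μ i ^ 2) (majorFeasible ν) μ)
    (hμ : μ ∈ majorFeasible ν) : Monotone μ := by
  refine Fin.monotone_iff_le_succ.2 fun k => le_of_not_gt fun hlt => ?_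
  have hslack : 0 ≤ partialSum (ν - μ) (k + 1) := hμ.2.1 _ (by omega)
  have h := nonneg_of_isMinOn_transfer hmin hμ k (ε := -(μ k.castSucc - μ k.succ) / 2)
    (by linarith)
    (by linarith [hμ.1 k.succ]) (by linarith [hμ.1 k.succ])
  nlinarith

lemma eq_of_isMinOn_of_partialSum_pos
    (hmin : IsMinOn (fun μ => ∑ i, μ i ^ 2) (majorFeasible ν) μ) (hμ : μ ∈ majorFeasible ν)
    (k : Fin m) (hpos : 0 < partialSum (ν - μ) (k + 1)) :
    μ k.castSucc = μ k.succ := by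
  refine le_antisymm (monotone_of_isMinOn hmin hμ k.castSucc_le_succ) (le_of_not_gt fun hlt => ?_)
  set ε := min (partialSum (ν - μ) (k + 1)) ((μ k.succ - μ k.castSucc) / 2)
  have hε : 0 < ε := lt_min hpos (by linarith)
  have hεle : ε ≤ (μ k.succ - μ k.castSucc) / 2 := min_le_right _ _
  have h := nonneg_of_isMinOn_transfer hmin hμ k (min_le_left _ _) (by linarith [hμ.1 k.castSucc])
    (by linarith [hμ.1 k.castSucc])
  nlinarith

end Minimizer

section Duality

variable {n m : ℕ} {φ : ℝ → EReal}

noncomputable def divergence (φ : ℝ → EReal) (μ : Fin n → ℝ) : EReal :=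
  (((n : ℝ)⁻¹ : ℝ) : EReal) * ∑ i, φ (n * μ i)

noncomputable def dualObjective (φ : ℝ → EReal) (ν l : Fin n → ℝ) : EReal :=
  ∑ i, (((ν i * l i : ℝ) : EReal) - (((n : ℝ)⁻¹ : ℝ) : EReal) * fenchelConjugate φ (l i))

lemma dualObjective_le_divergence (hφ_bot : ∀ t, φ t ≠ ⊥) {ν μ l : Fin (m + 1) → ℝ}
    (hμ : μ ∈ majorFeasible ν) (hl : Monotone l) : dualObjective φ ν l ≤ divergence φ μ := by
  have hκ : (0 : ℝ) < (m + 1 : ℕ) := by positivity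
  have hpair : ∑ i, ν i * l i ≤ ∑ i, μ i * l i := by
    have h := sum_mul_nonpos_of_mem_majorCone_s8 hμ.2 hl
    simp only [Pi.sub_apply, mul_comm (l _), sub_mul, sum_sub_distrib] at h
    linarith
  calc dualObjective φ ν l
      ≤ ∑ i, (((μ i * l i : ℝ) : EReal)
          - (((m + 1 : ℕ) : ℝ)⁻¹ : EReal) * fenchelConjugate φ (l i)) :=
        EReal.sum_coe_sub_le_sum_coe_sub _ hpair
    _ ≤ ∑ i, (((m + 1 : ℕ) : ℝ)⁻¹ : EReal) * φ ((m + 1 : ℕ) * μ i) :=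
        sum_le_sum fun i _ => coe_mul_sub_inv_mul_fenchelConjugate_le hφ_bot hκ (hμ.1 i) (l i)
    _ = divergence φ μ :=
        (EReal.mul_finset_sum_of_nonneg_of_ne_top (by exact_mod_cast (inv_pos.2 hκ).le)
          (EReal.coe_ne_top _) _ _).symm

lemma exists_divergence_le_iSup_dualObjective (hφ_bot : ∀ t, φ t ≠ ⊥)
    (hφ_fin : ∀ t, 0 < t → φ t ≠ ⊤)
    (hconv : ConvexOn ℝ (nonnegDomain φ) (fun t => (φ t).toReal))
    (hφ_lsc : LowerSemicontinuous φ) {ν : Fin (m + 1) → ℝ} (hν : ∀ i, 0 ≤ ν i) :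
    ∃ μ ∈ majorFeasible ν,
      divergence φ μ ≤ ⨆ l ∈ {l : Fin (m + 1) → ℝ | Monotone l}, dualObjective φ ν l := by
  obtain ⟨μ, hμ, hmin⟩ := exists_isMinOn_sum_sq hν
  refine ⟨μ, hμ, ?_⟩
  set κ : ℝ := ((m + 1 : ℕ) : ℝ)
  have hκ : 0 < κ := by positivity
  have hq : (0 : EReal) < ((κ⁻¹ : ℝ) : EReal) := by exact_mod_cast inv_pos.2 hκ
  rw [divergence, EReal.mul_comm, ← EReal.le_div_iff_mul_le hq (EReal.coe_ne_top _)]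
  refine EReal.sum_le_of_forall_coe_lt fun c hc => ?_
  rw [EReal.le_div_iff_mul_le hq (EReal.coe_ne_top _), ← EReal.coe_mul, sum_mul]
  obtain ⟨r, hr, hterm⟩ := ((eventually_all.2 fun i =>
      eventually_ge_atTop (-leftDeriv φ (κ * μ i))).and (eventually_all.2 fun i =>
      eventually_coe_le_dualCandidate hφ_bot hφ_fin hconv hφ_lsc hκ (hμ.1 i)
        (hc i (Finset.mem_univ i)))).exists
  set l := fun i => dualCandidate φ κ r (μ i)
  have hl : Monotone l :=
    monotone_dualCandidate hφ_fin hconv hκ (monotone_of_isMinOn hmin hμ) hμ.1 fun i => by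
      linarith [hr i]
  have hpair : ∑ i, μ i * l i = ∑ i, ν i * l i := by
    have h := sum_mul_eq_zero_of_mem_majorCone hμ.2 (l := l) fun k hk =>
      congrArg (dualCandidate φ κ r) (eq_of_isMinOn_of_partialSum_pos hmin hμ k hk)
    simp only [Pi.sub_apply, mul_comm (l _), sub_mul, sum_sub_distrib] at h
    linarith
  calc ((∑ i, c i * κ⁻¹ : ℝ) : EReal) = ∑ i, ((κ⁻¹ * c i : ℝ) : EReal) := by
        rw [EReal.coe_finset_sum]; simp only [mul_comm]
    _ ≤ ∑ i, (((μ i * l i : ℝ) : EReal) - ((κ⁻¹ : ℝ) : EReal) * fenchelConjugate φ (l i)) :=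
        sum_le_sum fun i _ => hterm i
    _ ≤ dualObjective φ ν l := EReal.sum_coe_sub_le_sum_coe_sub _ hpair.le
    _ ≤ ⨆ l ∈ {l : Fin (m + 1) → ℝ | Monotone l}, dualObjective φ ν l :=
        le_iSup₂ (f := fun l (_ : l ∈ {l : Fin (m + 1) → ℝ | Monotone l}) => dualObjective φ ν l)
          l hl

end Duality

theorem phi_divergence_duality_general (n : ℕ) (hn : 1 ≤ n) (φ : ℝ → EReal)
    (hφ_bot : ∀ t : ℝ, φ t ≠ ⊥)
    (hφ_conv : ∀ x y a b : ℝ, 0 ≤ a → 0 ≤ b → a + b = 1 →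
      φ (a * x + b * y) ≤ (a : EReal) * φ x + (b : EReal) * φ y)
    (hφ_lsc : LowerSemicontinuous φ)
    (hφ_fin : ∀ t : ℝ, 0 < t → φ t ≠ ⊤)
    (φstar : ℝ → EReal)
    (hφstar : φstar = fun s => ⨆ t ∈ Set.Ici (0 : ℝ), ((t * s : ℝ) : EReal) - φ t)
    (ν : Fin n → ℝ) (hν : ν ∈ stdSimplex ℝ (Fin n)) :
    (⨅ μ ∈ {μ : Fin n → ℝ | (∀ i, 0 ≤ μ i) ∧ ν - μ ∈ majorCone n},
        (((n : ℝ)⁻¹ : ℝ) : EReal) * ∑ i, φ (n * μ i)) =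
      ⨆ l ∈ {l : Fin n → ℝ | Monotone l},
        ∑ i, (((ν i * l i : ℝ) : EReal) - (((n : ℝ)⁻¹ : ℝ) : EReal) * φstar (l i)) := by
  obtain ⟨m, rfl⟩ : ∃ m, n = m + 1 := ⟨n - 1, by omega⟩
  subst hφstar
  have hconv := convexOn_toReal hφ_bot hφ_conv (convex_nonnegDomain hφ_fin) fun _ ht => ht.2
  apply le_antisymm
  · obtain ⟨μ, hμ, hle⟩ := exists_divergence_le_iSup_dualObjective hφ_bot hφ_fin hconv hφ_lsc hν.1
    exact (iInf₂_le μ hμ).trans hle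
  · exact iSup₂_le fun l hl => le_iInf₂ fun μ hμ => dualObjective_le_divergence hφ_bot hμ hl

/-- strong duality for the adjusted `φ`-divergence. For a proper, convex, lsc
`φ : ℝ → ℝ ∪ {+∞}` with `φ(1) = 0`, `φ = +∞` on `(-∞,0)` and finite on `(0,∞)`, and
`φ*(s) = sup_{t ≥ 0} (t·s - φ(t))`, for every `ν ∈ Δ^n`:
`inf { (1/n) ∑ φ(n μ_i) : μ ≥ 0, ν - μ ∈ K^n } = sup_{λ nondecreasing} ∑ (ν_i λ_i - φ*(λ_i)/n)`. -/
theorem phi_divergence_duality (n : ℕ) (hn : 1 ≤ n) (φ : ℝ → EReal)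
    (hφ_bot : ∀ t : ℝ, φ t ≠ ⊥)
    (hφ_conv : ∀ x y a b : ℝ, 0 ≤ a → 0 ≤ b → a + b = 1 →
      φ (a * x + b * y) ≤ (a : EReal) * φ x + (b : EReal) * φ y)
    (hφ_lsc : LowerSemicontinuous φ)
    (hφ_one : φ 1 = 0)
    (hφ_neg : ∀ t : ℝ, t < 0 → φ t = ⊤)
    (hφ_fin : ∀ t : ℝ, 0 < t → φ t ≠ ⊤)
    (φstar : ℝ → EReal)
    (hφstar : φstar = fun s => ⨆ t ∈ Set.Ici (0 : ℝ), ((t * s : ℝ) : EReal) - φ t)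
    (ν : Fin n → ℝ) (hν : ν ∈ stdSimplex ℝ (Fin n)) :
    (⨅ μ ∈ {μ : Fin n → ℝ | (∀ i, 0 ≤ μ i) ∧ ν - μ ∈ majorCone n},
        (((n : ℝ)⁻¹ : ℝ) : EReal) * ∑ i, φ (n * μ i)) =
      ⨆ l ∈ {l : Fin n → ℝ | Monotone l},
        ∑ i, (((ν i * l i : ℝ) : EReal) - (((n : ℝ)⁻¹ : ℝ) : EReal) * φstar (l i)) :=
  phi_divergence_duality_general n hn φ hφ_bot hφ_conv hφ_lsc hφ_fin φstar hφstar ν hν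
end Majorization
end FenchelConjugate
end
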